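/- arXiv:2507.23405 — 3 statements merged into one kernel-verified Lean document; each statement's English description precedes it below -/
import Mathlib

section
/- Let p ≥ 2, let s = (s_1,…,s_p) with each s_k a positive integer, and let z_1, z_2, z_3 be integers with 0 ≤ z_1 ≤ z_2 < z_3 < p. Then for every additive subgroup 𝓛₁ of ℤ^p with (2ℤ)^p ⊆ 𝓛₁ ⊆ ℤ^p, |𝓛₁ ∩ {0,1}^p| = 2^{z_3}, and #{k : e_k ∈ 𝓛₁} = z_1, there exists an additive subgroup 𝓛₂ of ℤ^p with (2ℤ)^p ⊆ 𝓛₂ ⊆ ℤ^p, |𝓛₂ ∩ {0,1}^p| = 2^{z_3}, #{k : e_k ∈ 𝓛₂} = z_2, and m(𝓛₂,s,0_p) ≥ m(𝓛₁,s,0_p). (Equivalently, the maximum of m(𝓛,s,0_p) over such lattices with r(𝓛) = z_2 is at least the maximum over those with r(𝓛) = z_1.) -/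
open scoped BigOperators Classical

/-- A standard interleaved lattice in dimension `p`: an additive subgroup of `ℤ^p`
containing `(2ℤ)^p` whose projection onto every coordinate is all of `ℤ`. -/
def IsStdIL (p : ℕ) (L : AddSubgroup (Fin p → ℤ)) : Prop :=
  (∀ x : Fin p → ℤ, (∀ k, (2 : ℤ) ∣ x k) → x ∈ L) ∧
  (∀ (k : Fin p) (z : ℤ), ∃ x ∈ L, x k = z)

/-- `B(𝓛,s,u) = {x + u : x ∈ 𝓛} ∩ ∏_k {0,1,…,s_k−1}`. -/
def latticeBox (p : ℕ) (L : AddSubgroup (Fin p → ℤ)) (s : Fin p → ℕ)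
    (u : Fin p → ℤ) : Set (Fin p → ℤ) :=
  {y | y - u ∈ L ∧ ∀ k, 0 ≤ y k ∧ y k < (s k : ℤ)}

/-- `m(𝓛,s,u)`, the cardinality of `B(𝓛,s,u)`. -/
noncomputable def latticeSize (p : ℕ) (L : AddSubgroup (Fin p → ℤ)) (s : Fin p → ℕ)
    (u : Fin p → ℤ) : ℕ :=
  (latticeBox p L s u).ncard

/-- The `i`-th smallest element (0-indexed) of a finite set of reals. -/
noncomputable def nthLevel (γ : Finset ℝ) (i : ℕ) : ℝ :=
  (γ.sort (· ≤ ·)).getD i 0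

/-- The interleaved lattice-based design
`D(𝓛,s,𝒴,u) = {(𝒴_{1(i_1)},…,𝒴_{p(i_p)}) : (i_1−1,…,i_p−1) ∈ B(𝓛,s,u)} ⊆ ℝ^p`. -/
noncomputable def design (p : ℕ) (L : AddSubgroup (Fin p → ℤ)) (s : Fin p → ℕ)
    (Y : Fin p → Finset ℝ) (u : Fin p → ℤ) : Set (EuclideanSpace ℝ (Fin p)) :=
  {v | ∃ y ∈ latticeBox p L s u, ∀ k, v k = nthLevel (Y k) (y k).toNat}

/-- `d*(γ)`: minimum gap between adjacent elements of `γ`. -/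
noncomputable def dstar (γ : Finset ℝ) : ℝ :=
  ⨅ i : Fin (γ.card - 1), (nthLevel γ (i.1 + 1) - nthLevel γ i.1)

/-- `d⁺(γ)`: minimum gap between elements two positions apart in `γ`. -/
noncomputable def dplus (γ : Finset ℝ) : ℝ :=
  ⨅ i : Fin (γ.card - 2), (nthLevel γ (i.1 + 2) - nthLevel γ i.1)

/- ===== auxiliary development ===== -/

section Stmt2Aux

variable {p : ℕ}

lemma zmod2_cases (a : ZMod 2) : a = 0 ∨ a = 1 := by revert a; decide

lemma zmod2_ne_zero {a : ZMod 2} (h : ¬ a = 0) : a = 1 := by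
  rcases zmod2_cases a with h0 | h1
  · exact absurd h0 h
  · exact h1

/-- sign character on `ZMod 2` -/
noncomputable def eps (a : ZMod 2) : ℝ := if a = 0 then 1 else -1

lemma eps_add (a b : ZMod 2) : eps (a + b) = eps a * eps b := by
  have h11 : (1 + 1 : ZMod 2) = 0 := by decide
  rcases zmod2_cases a with ha | ha <;> rcases zmod2_cases b with hb | hb <;>
    subst ha <;> subst hb <;> simp [eps, h11]

lemma eps_zero : eps 0 = 1 := by norm_num [eps]

lemma eps_one : eps 1 = -1 := by norm_num [eps]

lemma eps_pm (a : ZMod 2) : eps a = 1 ∨ eps a = -1 := by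
  rcases zmod2_cases a with h | h <;> subst h <;> norm_num [eps]

lemma prod_eps_pm (T : Finset (Fin p)) (t : Fin p → ZMod 2) :
    (∏ k ∈ T, eps (t k)) = 1 ∨ (∏ k ∈ T, eps (t k)) = -1 := by
  classical
  induction T using Finset.induction_on with
  | empty => left; simp
  | insert _ _ hx ih =>
    rw [Finset.prod_insert hx]
    rcases eps_pm _ with h | h <;> rcases ih with h2 | h2 <;> rw [h, h2] <;> norm_num

lemma add_add_self_cancel (a h0 : Fin p → ZMod 2) : a + h0 + h0 = a := by
  funext k; simp [add_assoc, CharTwo.add_self_eq_zero]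

/-- character sum over an addition-closed finset is nonnegative -/
lemma char_sum_nonneg (H : Finset (Fin p → ZMod 2))
    (hH : ∀ x ∈ H, ∀ y ∈ H, x + y ∈ H) (T : Finset (Fin p)) :
    0 ≤ ∑ x ∈ H, ∏ k ∈ T, eps (x k) := by
  classical
  set χ : (Fin p → ZMod 2) → ℝ := fun x => ∏ k ∈ T, eps (x k) with hχ
  by_cases hex : ∃ h0 ∈ H, χ h0 = -1
  · obtain ⟨h0, h0H, hneg⟩ := hex
    have key : ∑ x ∈ H, χ x = ∑ x ∈ H, χ (x + h0) := by
      refine Finset.sum_nbij' (fun x => x + h0) (fun x => x + h0) ?_ ?_ ?_ ?_ ?_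
      · intro a ha; exact hH a ha h0 h0H
      · intro a ha; exact hH a ha h0 h0H
      · intro a _; exact add_add_self_cancel a h0
      · intro a _; exact add_add_self_cancel a h0
      · intro a _; rw [add_add_self_cancel]
    have key2 : ∀ x, χ (x + h0) = χ x * χ h0 := by
      intro x
      simp only [hχ, ← Finset.prod_mul_distrib]
      exact Finset.prod_congr rfl (fun k _ => eps_add _ _)
    rw [Finset.sum_congr rfl (fun x _ => key2 x)] at key
    simp only [hneg, mul_neg_one] at key
    have hz : ∑ x ∈ H, χ x = 0 := by
      have h2 : ∑ x ∈ H, χ x = -∑ x ∈ H, χ x := key.trans (Finset.sum_neg_distrib _)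
      linarith
    rw [hz]
  · push_neg at hex
    have : ∀ x ∈ H, χ x = 1 := by
      intro x hx
      rcases prod_eps_pm T x with h | h
      · exact h
      · exact absurd h (hex x hx)
    rw [Finset.sum_congr rfl this]
    simp

lemma expand_sum (H : Finset (Fin p → ZMod 2)) (t : Fin p → ZMod 2) (α β : Fin p → ℝ) :
    ∑ x ∈ H, ∏ k, (β k * eps (t k) * eps (x k) + α k)
    = ∑ T ∈ (Finset.univ : Finset (Fin p)).powerset,
        ((∏ k ∈ T, β k) * (∏ k ∈ T, eps (t k)) * (∏ k ∈ Finset.univ \ T, α k))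
          * ∑ x ∈ H, ∏ k ∈ T, eps (x k) := by
  classical
  have h1 : ∀ x : Fin p → ZMod 2,
      ∏ k, (β k * eps (t k) * eps (x k) + α k)
      = ∑ T ∈ (Finset.univ : Finset (Fin p)).powerset,
          (∏ k ∈ T, (β k * eps (t k) * eps (x k))) * ∏ k ∈ Finset.univ \ T, α k :=
    fun x => Finset.prod_add _ _ _
  rw [Finset.sum_congr rfl (fun x _ => h1 x), Finset.sum_comm]
  refine Finset.sum_congr rfl (fun T _ => ?_)
  rw [Finset.mul_sum]
  refine Finset.sum_congr rfl (fun x _ => ?_)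
  rw [Finset.prod_mul_distrib, Finset.prod_mul_distrib]
  ring

lemma lemmaA_real (H : Finset (Fin p → ZMod 2))
    (hH : ∀ x ∈ H, ∀ y ∈ H, x + y ∈ H) (t : Fin p → ZMod 2)
    (g : Fin p → ZMod 2 → ℝ) (hg1 : ∀ k, 0 ≤ g k 1) (hg : ∀ k, g k 1 ≤ g k 0) :
    ∑ x ∈ H, ∏ k, g k (x k + t k) ≤ ∑ x ∈ H, ∏ k, g k (x k) := by
  classical
  set α : Fin p → ℝ := fun k => (g k 0 + g k 1) / 2 with hα
  set β : Fin p → ℝ := fun k => (g k 0 - g k 1) / 2 with hβ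
  have hαnn : ∀ k, 0 ≤ α k := fun k => by
    have := hg1 k; have := hg k; simp only [hα]; linarith
  have hβnn : ∀ k, 0 ≤ β k := fun k => by
    have := hg k; simp only [hβ]; linarith
  have hg_eq : ∀ k a, g k a = β k * eps a + α k := by
    intro k a
    rcases zmod2_cases a with h | h <;> subst h
    · rw [eps_zero]; simp only [hα, hβ]; ring
    · rw [eps_one]; simp only [hα, hβ]; ring
  have lhs_eq : ∑ x ∈ H, ∏ k, g k (x k + t k)
      = ∑ x ∈ H, ∏ k, (β k * eps (t k) * eps (x k) + α k) := by
    refine Finset.sum_congr rfl (fun x _ => Finset.prod_congr rfl (fun k _ => ?_))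
    rw [hg_eq, eps_add]; ring
  have rhs_eq : ∑ x ∈ H, ∏ k, g k (x k)
      = ∑ x ∈ H, ∏ k, (β k * eps ((0 : Fin p → ZMod 2) k) * eps (x k) + α k) := by
    refine Finset.sum_congr rfl (fun x _ => Finset.prod_congr rfl (fun k _ => ?_))
    rw [hg_eq]; simp only [Pi.zero_apply, eps_zero]; ring
  rw [lhs_eq, rhs_eq, expand_sum, expand_sum]
  refine Finset.sum_le_sum (fun T _ => ?_)
  have hS := char_sum_nonneg H hH T
  have hE : (∏ k ∈ T, eps (t k)) ≤ 1 := by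
    rcases prod_eps_pm T t with h | h <;> rw [h] <;> norm_num
  have hE0 : (∏ k ∈ T, eps ((0 : Fin p → ZMod 2) k)) = 1 := by
    simp [eps_zero]
  rw [hE0]
  have hB : 0 ≤ ∏ k ∈ T, β k := Finset.prod_nonneg (fun k _ => hβnn k)
  have hA : 0 ≤ ∏ k ∈ Finset.univ \ T, α k := Finset.prod_nonneg (fun k _ => hαnn k)
  nlinarith [mul_nonneg (mul_nonneg hB hA) hS]

lemma lemmaA_nat (H : Finset (Fin p → ZMod 2))
    (hH : ∀ x ∈ H, ∀ y ∈ H, x + y ∈ H) (t : Fin p → ZMod 2)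
    (g : Fin p → ZMod 2 → ℕ) (hg : ∀ k, g k 1 ≤ g k 0) :
    ∑ x ∈ H, ∏ k, g k (x k + t k) ≤ ∑ x ∈ H, ∏ k, g k (x k) := by
  have h := lemmaA_real H hH t (fun k a => (g k a : ℝ))
    (fun k => by positivity)
    (fun k => show ((g k 1 : ℝ)) ≤ ((g k 0 : ℝ)) from by exact_mod_cast hg k)
  exact_mod_cast h

def red (x : Fin p → ℤ) : Fin p → ZMod 2 := fun k => (x k : ZMod 2)

def liftv (v : Fin p → ZMod 2) : Fin p → ℤ := fun k => ((v k).val : ℤ)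

lemma red_liftv (v : Fin p → ZMod 2) : red (liftv v) = v := by
  funext k; simp [red, liftv]

lemma red_add (x y : Fin p → ℤ) : red (x + y) = red x + red y := by
  funext k; simp [red]

lemma liftv_inj : Function.Injective (liftv (p := p)) := by
  intro v w h
  have := congrArg red h
  rwa [red_liftv, red_liftv] at this

lemma liftv_01 (v : Fin p → ZMod 2) (k : Fin p) : liftv v k = 0 ∨ liftv v k = 1 := by
  rcases zmod2_cases (v k) with h | h
  · left; simp only [liftv, h]; decide
  · right; simp only [liftv, h]; decide

lemma liftv_red_of_01 (x : Fin p → ℤ) (h : ∀ k, x k = 0 ∨ x k = 1) :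
    liftv (red x) = x := by
  funext k
  rcases h k with h' | h' <;> (rw [h']; simp only [liftv, red, h']; decide)

lemma liftv_zero : liftv (0 : Fin p → ZMod 2) = 0 := by
  funext k; simp only [liftv, Pi.zero_apply]; decide

lemma sub_liftv_red_even (x : Fin p → ℤ) (k : Fin p) :
    (2:ℤ) ∣ (x k - liftv (red x) k) := by
  have : ((x k - liftv (red x) k : ℤ) : ZMod 2) = 0 := by
    push_cast
    simp [liftv, red]
  exact (ZMod.intCast_zmod_eq_zero_iff_dvd _ 2).mp this

lemma q_transfer (L : AddSubgroup (Fin p → ℤ)) (C : Finset (Fin p → ZMod 2))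
    (hLC : ∀ x, x ∈ L ↔ red x ∈ C) :
    {x : Fin p → ℤ | x ∈ L ∧ ∀ k, x k = 0 ∨ x k = 1}.ncard = C.card := by
  classical
  have hset : {x : Fin p → ℤ | x ∈ L ∧ ∀ k, x k = 0 ∨ x k = 1} = ↑(C.image liftv) := by
    ext x
    simp only [Set.mem_setOf_eq, Finset.coe_image, Set.mem_image, Finset.mem_coe]
    constructor
    · rintro ⟨hxL, h01⟩
      exact ⟨red x, (hLC x).mp hxL, liftv_red_of_01 x h01⟩
    · rintro ⟨v, hv, rfl⟩
      exact ⟨(hLC _).mpr (by rw [red_liftv]; exact hv), liftv_01 v⟩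
  rw [hset, Set.ncard_coe_finset, Finset.card_image_of_injective _ liftv_inj]

lemma red_single (k : Fin p) : red (Pi.single k (1:ℤ)) = Pi.single k (1 : ZMod 2) := by
  funext l
  by_cases h : l = k
  · subst h; simp [red]
  · simp [red, Pi.single_apply, h]

noncomputable def rfin (C : Finset (Fin p → ZMod 2)) : ℕ :=
  (Finset.univ.filter
    (fun k : Fin p => (Pi.single k (1 : ZMod 2) : Fin p → ZMod 2) ∈ C)).card

lemma r_transfer (L : AddSubgroup (Fin p → ℤ)) (C : Finset (Fin p → ZMod 2))
    (hLC : ∀ x, x ∈ L ↔ red x ∈ C) :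
    {k : Fin p | Pi.single k (1:ℤ) ∈ L}.ncard = rfin C := by
  classical
  have hset : {k : Fin p | Pi.single k (1:ℤ) ∈ L}
      = ↑(Finset.univ.filter
          (fun k : Fin p => (Pi.single k (1 : ZMod 2) : Fin p → ZMod 2) ∈ C)) := by
    ext k
    simp only [Set.mem_setOf_eq, Finset.coe_filter, Finset.mem_univ, true_and, hLC,
      red_single]
  rw [hset, Set.ncard_coe_finset, rfin]

noncomputable def cnt (s : ℕ) (v : ZMod 2) : ℕ :=
  ((Finset.Ico (0:ℤ) s).filter (fun b : ℤ => ((b : ZMod 2) = v))).card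

lemma cnt_mono (s : ℕ) : cnt s 1 ≤ cnt s 0 := by
  classical
  refine Finset.card_le_card_of_injOn (fun b => b - 1) ?_ ?_
  · intro b hb
    simp only [Finset.mem_coe, Finset.mem_filter, Finset.mem_Ico] at hb ⊢
    obtain ⟨⟨hb0, hbs⟩, hbp⟩ := hb
    have hbne : b ≠ 0 := by
      intro h; rw [h] at hbp; simp at hbp
    refine ⟨⟨by omega, by omega⟩, ?_⟩
    push_cast
    rw [hbp]
    ring
  · intro a _ b _ h
    dsimp at h
    omega

noncomputable def wsum (s : Fin p → ℕ) (C : Finset (Fin p → ZMod 2)) : ℕ :=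
  ∑ x ∈ C, ∏ k, cnt (s k) (x k)

lemma latticeSize_eq_wsum (s : Fin p → ℕ) (L : AddSubgroup (Fin p → ℤ))
    (C : Finset (Fin p → ZMod 2)) (hLC : ∀ x, x ∈ L ↔ red x ∈ C) :
    latticeSize p L s 0 = wsum s C := by
  classical
  set B : Finset (Fin p → ℤ) := Fintype.piFinset fun k => Finset.Ico (0:ℤ) (s k) with hB
  have hbox : latticeBox p L s 0 = ↑(B.filter (fun x => red x ∈ C)) := by
    ext y
    simp only [latticeBox, Set.mem_setOf_eq, sub_zero, Finset.coe_filter,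
      Fintype.mem_piFinset, Finset.mem_Ico, hB, hLC]
    tauto
  rw [latticeSize, hbox, Set.ncard_coe_finset]
  rw [Finset.card_eq_sum_card_fiberwise (s := B.filter (fun x => red x ∈ C)) (f := red) (t := C)
    (fun x hx => (Finset.mem_filter.mp (Finset.mem_coe.mp hx)).2)]
  refine Finset.sum_congr rfl (fun v hv => ?_)
  have h1 : (B.filter (fun x => red x ∈ C)).filter (fun x => red x = v)
      = B.filter (fun x => red x = v) := by
    ext x
    simp only [Finset.mem_filter, and_assoc]
    constructor
    · rintro ⟨h1, _, h3⟩; exact ⟨h1, h3⟩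
    · rintro ⟨h1, h3⟩; exact ⟨h1, h3 ▸ hv, h3⟩
  rw [h1]
  have h2 : B.filter (fun x => red x = v)
      = Fintype.piFinset fun k =>
          (Finset.Ico (0:ℤ) (s k)).filter (fun b : ℤ => ((b : ZMod 2) = v k)) := by
    ext x
    simp only [Finset.mem_filter, Fintype.mem_piFinset, hB, funext_iff, red]
    aesop
  rw [h2, Fintype.card_piFinset]
  rfl

lemma upd_add (j : Fin p) (x y : Fin p → ZMod 2) :
    Function.update (x + y) j 0 = Function.update x j 0 + Function.update y j 0 := by
  funext k
  by_cases h : k = j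
  · subst h; simp
  · simp [Function.update_apply, h]

lemma upd_of_zero {j : Fin p} {x : Fin p → ZMod 2} (h : x j = 0) :
    Function.update x j 0 = x := by
  rw [← h]; exact Function.update_eq_self j x

lemma step_lemma (s : Fin p → ℕ) (C : Finset (Fin p → ZMod 2))
    (hadd : ∀ x ∈ C, ∀ y ∈ C, x + y ∈ C) (h0 : (0 : Fin p → ZMod 2) ∈ C)
    (v : Fin p → ZMod 2) (hv : v ∈ C) (j : Fin p) (hvj : v j = 1)
    (hj : (Pi.single j (1 : ZMod 2) : Fin p → ZMod 2) ∉ C) :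
    ∃ C' : Finset (Fin p → ZMod 2),
      (∀ x ∈ C', ∀ y ∈ C', x + y ∈ C') ∧ (0 : Fin p → ZMod 2) ∈ C' ∧
      C'.card = C.card ∧ rfin C' = rfin C + 1 ∧ wsum s C ≤ wsum s C' := by
  classical
  set e : Fin p → ZMod 2 := Pi.single j 1 with he
  have hej : e j = 1 := by simp [he]
  have hek : ∀ k, k ≠ j → e k = 0 := fun k hk => by simp [he, Pi.single_apply, hk]
  set C' : Finset (Fin p → ZMod 2) :=
    Finset.univ.filter (fun x => Function.update x j 0 ∈ C) with hC'
  have memC' : ∀ x, x ∈ C' ↔ Function.update x j 0 ∈ C := by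
    intro x; simp [hC']
  have h11 : (1 : ZMod 2) + 1 = 0 := by decide
  have memC'_0 : ∀ x, x j = 0 → (x ∈ C' ↔ x ∈ C) := by
    intro x hx; rw [memC', upd_of_zero hx]
  have memC'_1 : ∀ x, x j = 1 → (x ∈ C' ↔ x + e ∈ C) := by
    intro x hx
    rw [memC']
    have : Function.update x j 0 = x + e := by
      funext k
      by_cases h : k = j
      · subst h; simp [hx, hej, h11]
      · simp [Function.update_apply, h, hek k h]
    rw [this]
  refine ⟨C', ?_, ?_, ?_, ?_, ?_⟩
  · intro x hx y hy
    rw [memC'] at hx hy ⊢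
    rw [upd_add]
    exact hadd _ hx _ hy
  · rw [memC']
    have : Function.update (0 : Fin p → ZMod 2) j 0 = 0 := upd_of_zero rfl
    rw [this]; exact h0
  · have φinv : ∀ x : Fin p → ZMod 2, x j = 1 → (x + v + e) + v + e = x := by
      intro x _
      funext k
      show x k + v k + e k + v k + e k = x k
      have h2 : ∀ a : ZMod 2, a + a = 0 := by decide
      rw [show x k + v k + e k + v k + e k
          = x k + (v k + v k) + (e k + e k) by ring, h2, h2, add_zero, add_zero]
    refine (Finset.card_bij' (fun x _ => if x j = 0 then x else x + v + e)
      (fun x _ => if x j = 0 then x else x + v + e) ?_ ?_ ?_ ?_).symm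
    · intro x hx
      by_cases h : x j = 0
      · rw [if_pos h]; exact (memC'_0 x h).mpr hx
      · rw [if_neg h]
        have hx1 : x j = 1 := zmod2_ne_zero h
        have hj1 : (x + v + e) j = 1 := by
          show x j + v j + e j = 1
          rw [hx1, hvj, hej, h11, zero_add]
        rw [memC'_1 _ hj1]
        have : (x + v + e) + e = x + v := by
          funext k
          show x k + v k + e k + e k = x k + v k
          have h2 : ∀ a : ZMod 2, a + a = 0 := by decide
          rw [add_assoc, h2, add_zero]
        rw [this]
        exact hadd _ hx _ hv
    · intro x hx
      by_cases h : x j = 0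
      · rw [if_pos h]; exact (memC'_0 x h).mp hx
      · rw [if_neg h]
        have hx1 : x j = 1 := zmod2_ne_zero h
        have hxe : x + e ∈ C := (memC'_1 x hx1).mp hx
        have : x + v + e = (x + e) + v := by
          funext k; show x k + v k + e k = x k + e k + v k; ring
        rw [this]
        exact hadd _ hxe _ hv
    · intro x _
      by_cases h : x j = 0
      · simp [h]
      · have hx1 : x j = 1 := zmod2_ne_zero h
        rw [if_neg h]
        have hj1 : (x + v + e) j = 1 := by
          show x j + v j + e j = 1
          rw [hx1, hvj, hej, h11, zero_add]
        rw [if_neg (by rw [hj1]; exact one_ne_zero)]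
        exact φinv x hx1
    · intro x _
      by_cases h : x j = 0
      · simp [h]
      · have hx1 : x j = 1 := zmod2_ne_zero h
        rw [if_neg h]
        have hj1 : (x + v + e) j = 1 := by
          show x j + v j + e j = 1
          rw [hx1, hvj, hej, h11, zero_add]
        rw [if_neg (by rw [hj1]; exact one_ne_zero)]
        exact φinv x hx1
  · have hset : Finset.univ.filter
          (fun k : Fin p => (Pi.single k (1 : ZMod 2) : Fin p → ZMod 2) ∈ C')
        = insert j (Finset.univ.filter
          (fun k : Fin p => (Pi.single k (1 : ZMod 2) : Fin p → ZMod 2) ∈ C)) := by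
      ext k
      simp only [Finset.mem_filter, Finset.mem_univ, true_and, Finset.mem_insert]
      by_cases h : k = j
      · subst h
        constructor
        · intro _; exact Or.inl rfl
        · intro _
          rw [memC']
          have : Function.update (Pi.single k (1:ZMod 2) : Fin p → ZMod 2) k 0
              = 0 := by
            funext l
            by_cases hl : l = k
            · subst hl; simp
            · simp [Function.update_apply, hl, Pi.single_apply]
          rw [this]; exact h0
      · rw [memC']
        have : Function.update (Pi.single k (1:ZMod 2) : Fin p → ZMod 2) j 0
            = Pi.single k (1:ZMod 2) := by
          apply upd_of_zero
          simp [Pi.single_apply, Ne.symm h]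
        rw [this]
        constructor
        · intro h'; exact Or.inr h'
        · rintro (h' | h')
          · exact absurd h' h
          · exact h'
    rw [rfin, rfin, hset, Finset.card_insert_of_notMem]
    simp only [Finset.mem_filter, Finset.mem_univ, true_and]
    exact hj
  · set w : (Fin p → ZMod 2) → ℕ := fun x => ∏ k, cnt (s k) (x k) with hw
    set U0 : Finset (Fin p → ZMod 2) := C.filter (fun x => x j = 0) with hU0
    have hU0add : ∀ x ∈ U0, ∀ y ∈ U0, x + y ∈ U0 := by
      intro x hx y hy
      simp only [hU0, Finset.mem_filter] at hx hy ⊢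
      exact ⟨hadd _ hx.1 _ hy.1, by show x j + y j = 0; rw [hx.2, hy.2, add_zero]⟩
    have split : ∀ D : Finset (Fin p → ZMod 2),
        ∑ x ∈ D, w x = ∑ x ∈ D.filter (fun x => x j = 0), w x
          + ∑ x ∈ D.filter (fun x => ¬ x j = 0), w x :=
      fun D => (Finset.sum_filter_add_sum_filter_not D _ w).symm
    have eq1 : C'.filter (fun x => x j = 0) = U0 := by
      ext x
      simp only [hU0, Finset.mem_filter]
      constructor
      · rintro ⟨hx, hx0⟩; exact ⟨(memC'_0 x hx0).mp hx, hx0⟩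
      · rintro ⟨hx, hx0⟩; exact ⟨(memC'_0 x hx0).mpr hx, hx0⟩
    have h2 : ∀ a : ZMod 2, a + a = 0 := by decide
    have eq2 : ∑ x ∈ C'.filter (fun x => ¬ x j = 0), w x
        = ∑ x ∈ U0, w (x + e) := by
      refine Finset.sum_nbij' (fun x => x + e) (fun x => x + e) ?_ ?_ ?_ ?_ ?_
      · intro x hx
        simp only [Finset.mem_filter] at hx
        have hx1 : x j = 1 := zmod2_ne_zero hx.2
        simp only [hU0, Finset.mem_filter]
        refine ⟨(memC'_1 x hx1).mp hx.1, ?_⟩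
        show x j + e j = 0
        rw [hx1, hej, h11]
      · intro x hx
        simp only [hU0, Finset.mem_filter] at hx
        simp only [Finset.mem_filter]
        have hj1 : (x + e) j = 1 := by
          show x j + e j = 1; rw [hx.2, hej, zero_add]
        constructor
        · rw [memC'_1 _ hj1]
          have : (x + e) + e = x := by
            funext k; show x k + e k + e k = x k
            rw [add_assoc, h2, add_zero]
          rw [this]; exact hx.1
        · rw [hj1]; exact one_ne_zero
      · intro x _
        funext k; show x k + e k + e k = x k
        rw [add_assoc, h2, add_zero]
      · intro x _
        funext k; show x k + e k + e k = x k
        rw [add_assoc, h2, add_zero]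
      · intro x _
        have hc : (fun x => x + e) x + e = x := by
          funext k; show x k + e k + e k = x k
          rw [add_assoc, h2, add_zero]
        rw [hc]
    have eq3 : ∑ x ∈ C.filter (fun x => ¬ x j = 0), w x
        = ∑ x ∈ U0, w (x + v) := by
      refine Finset.sum_nbij' (fun x => x + v) (fun x => x + v) ?_ ?_ ?_ ?_ ?_
      · intro x hx
        simp only [Finset.mem_filter] at hx
        have hx1 : x j = 1 := zmod2_ne_zero hx.2
        simp only [hU0, Finset.mem_filter]
        exact ⟨hadd _ hx.1 _ hv, by show x j + v j = 0; rw [hx1, hvj, h11]⟩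
      · intro x hx
        simp only [hU0, Finset.mem_filter] at hx
        simp only [Finset.mem_filter]
        refine ⟨hadd _ hx.1 _ hv, ?_⟩
        show ¬ (x j + v j = 0)
        rw [hx.2, hvj, zero_add]
        exact one_ne_zero
      · intro x _
        funext k; show x k + v k + v k = x k
        rw [add_assoc, h2, add_zero]
      · intro x _
        funext k; show x k + v k + v k = x k
        rw [add_assoc, h2, add_zero]
      · intro x _
        have hc : (fun x => x + v) x + v = x := by
          funext k; show x k + v k + v k = x k
          rw [add_assoc, h2, add_zero]
        rw [hc]
    have key : ∑ x ∈ U0, w (x + v) ≤ ∑ x ∈ U0, w (x + e) := by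
      set g : Fin p → ZMod 2 → ℕ :=
        fun k => if k = j then (fun _ => cnt (s j) 1) else cnt (s k) with hg
      have hgm : ∀ k, g k 1 ≤ g k 0 := by
        intro k
        by_cases h : k = j
        · simp [hg, h]
        · simp only [hg, if_neg h]; exact cnt_mono (s k)
      have hA := lemmaA_nat U0 hU0add v g hgm
      have lhs : ∀ x ∈ U0, (∏ k, g k (x k + v k)) = w (x + v) := by
        intro x hx
        simp only [hU0, Finset.mem_filter] at hx
        refine Finset.prod_congr rfl (fun k _ => ?_)
        by_cases h : k = j
        · subst h
          simp only [hg, if_pos rfl]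
          show cnt (s k) 1 = cnt (s k) (x k + v k)
          rw [hx.2, hvj, zero_add]
        · simp [hg, if_neg h]
      have rhs : ∀ x ∈ U0, (∏ k, g k (x k)) = w (x + e) := by
        intro x hx
        simp only [hU0, Finset.mem_filter] at hx
        refine Finset.prod_congr rfl (fun k _ => ?_)
        by_cases h : k = j
        · subst h
          simp only [hg, if_pos rfl]
          show cnt (s k) 1 = cnt (s k) (x k + e k)
          rw [hx.2, hej, zero_add]
        · simp only [hg, if_neg h]
          show cnt (s k) (x k) = cnt (s k) (x k + e k)
          rw [hek k h, add_zero]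
      calc ∑ x ∈ U0, w (x + v) = ∑ x ∈ U0, ∏ k, g k (x k + v k) :=
            (Finset.sum_congr rfl lhs).symm
        _ ≤ ∑ x ∈ U0, ∏ k, g k (x k) := hA
        _ = ∑ x ∈ U0, w (x + e) := Finset.sum_congr rfl rhs
    show ∑ x ∈ C, w x ≤ ∑ x ∈ C', w x
    rw [split C, split C', eq1, eq2, eq3]
    exact Nat.add_le_add_left key _

lemma ex_vj (z3 : ℕ) (C : Finset (Fin p → ZMod 2)) (hcard : C.card = 2 ^ z3)
    (hr : rfin C < z3) :
    ∃ v ∈ C, ∃ j : Fin p, v j = 1 ∧ (Pi.single j (1 : ZMod 2) : Fin p → ZMod 2) ∉ C := by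
  classical
  by_contra hcon
  push_neg at hcon
  set D : Finset (Fin p → ZMod 2) := Fintype.piFinset
    (fun k : Fin p => if (Pi.single k (1 : ZMod 2) : Fin p → ZMod 2) ∈ C
      then (Finset.univ : Finset (ZMod 2)) else {0}) with hD
  have hsub : C ⊆ D := by
    intro x hx
    rw [hD, Fintype.mem_piFinset]
    intro k
    by_cases h : (Pi.single k (1 : ZMod 2) : Fin p → ZMod 2) ∈ C
    · rw [if_pos h]; exact Finset.mem_univ _
    · rw [if_neg h, Finset.mem_singleton]
      by_contra hxk
      exact h (hcon x hx k (zmod2_ne_zero hxk))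
  have hDcard : D.card = 2 ^ rfin C := by
    rw [hD, Fintype.card_piFinset]
    have : ∀ k : Fin p, (if (Pi.single k (1 : ZMod 2) : Fin p → ZMod 2) ∈ C
        then (Finset.univ : Finset (ZMod 2)) else {0}).card
        = if (Pi.single k (1 : ZMod 2) : Fin p → ZMod 2) ∈ C then 2 else 1 := by
      intro k
      by_cases h : (Pi.single k (1 : ZMod 2) : Fin p → ZMod 2) ∈ C <;> simp [h]
    rw [Finset.prod_congr rfl (fun k _ => this k), Finset.prod_ite, Finset.prod_const,
      Finset.prod_const, one_pow, mul_one]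
    rfl
  have hle : (2:ℕ) ^ z3 ≤ 2 ^ rfin C := by
    rw [← hcard, ← hDcard]; exact Finset.card_le_card hsub
  have := (Nat.pow_le_pow_iff_right (le_refl 2)).mp hle
  omega

lemma iterate_step (s : Fin p → ℕ) (z2 z3 : ℕ) (h23 : z2 < z3) :
    ∀ n : ℕ, ∀ C : Finset (Fin p → ZMod 2),
      (∀ x ∈ C, ∀ y ∈ C, x + y ∈ C) → (0 : Fin p → ZMod 2) ∈ C →
      C.card = 2 ^ z3 → rfin C + n ≤ z2 →
      ∃ C2 : Finset (Fin p → ZMod 2),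
        (∀ x ∈ C2, ∀ y ∈ C2, x + y ∈ C2) ∧ (0 : Fin p → ZMod 2) ∈ C2 ∧
        C2.card = 2 ^ z3 ∧ rfin C2 = rfin C + n ∧ wsum s C ≤ wsum s C2 := by
  intro n
  induction n with
  | zero =>
    intro C hadd h0 hcard _
    exact ⟨C, hadd, h0, hcard, by omega, le_refl _⟩
  | succ n ih =>
    intro C hadd h0 hcard hle
    have hrlt : rfin C < z3 := by omega
    obtain ⟨v, hv, j, hvj, hj⟩ := ex_vj z3 C hcard hrlt
    obtain ⟨C', hadd', h0', hcard', hr', hw'⟩ :=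
      step_lemma s C hadd h0 v hv j hvj hj
    obtain ⟨C2, hadd2, h02, hcard2, hr2, hw2⟩ :=
      ih C' hadd' h0' (hcard'.trans hcard) (by omega)
    exact ⟨C2, hadd2, h02, hcard2, by omega, le_trans hw' hw2⟩

end Stmt2Aux

/-- for lattices with `q(𝓛) = z₃`, increasing `r(𝓛)` from `z₁` to `z₂`
does not decrease the attainable size `m(𝓛,s,0_p)`. -/

theorem stmt_2 (p : ℕ) (hp : 2 ≤ p) (s : Fin p → ℕ) (hs : ∀ k, 1 ≤ s k)
    (z1 z2 z3 : ℕ) (h12 : z1 ≤ z2) (h23 : z2 < z3) (h3p : z3 < p)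
    (L1 : AddSubgroup (Fin p → ℤ))
    (hsub1 : ∀ x : Fin p → ℤ, (∀ k, (2 : ℤ) ∣ x k) → x ∈ L1)
    (hq1 : {x : Fin p → ℤ | x ∈ L1 ∧ ∀ k, x k = 0 ∨ x k = 1}.ncard = 2 ^ z3)
    (hr1 : {k : Fin p | Pi.single k (1 : ℤ) ∈ L1}.ncard = z1) :
    ∃ L2 : AddSubgroup (Fin p → ℤ),
      (∀ x : Fin p → ℤ, (∀ k, (2 : ℤ) ∣ x k) → x ∈ L2) ∧
      {x : Fin p → ℤ | x ∈ L2 ∧ ∀ k, x k = 0 ∨ x k = 1}.ncard = 2 ^ z3 ∧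
      {k : Fin p | Pi.single k (1 : ℤ) ∈ L2}.ncard = z2 ∧
      latticeSize p L1 s 0 ≤ latticeSize p L2 s 0 := by
  classical
  set C1 : Finset (Fin p → ZMod 2) :=
    Finset.univ.filter (fun v : Fin p → ZMod 2 => liftv v ∈ L1) with hC1
  have hmemC1 : ∀ v : Fin p → ZMod 2, v ∈ C1 ↔ liftv v ∈ L1 := by
    intro v; simp [hC1]
  have hLC1 : ∀ x : Fin p → ℤ, x ∈ L1 ↔ red x ∈ C1 := by
    intro x
    rw [hmemC1]
    have hdiff : x - liftv (red x) ∈ L1 := hsub1 _ (fun k => sub_liftv_red_even x k)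
    constructor
    · intro hx
      have h := sub_mem hx hdiff
      rwa [sub_sub_cancel] at h
    · intro hx
      have h := add_mem hx hdiff
      rwa [show liftv (red x) + (x - liftv (red x)) = x from by ring] at h
  have hadd1 : ∀ a ∈ C1, ∀ b ∈ C1, a + b ∈ C1 := by
    intro a ha b hb
    rw [hmemC1] at ha hb
    have h2 : red (liftv a + liftv b) ∈ C1 := (hLC1 _).mp (add_mem ha hb)
    rwa [red_add, red_liftv, red_liftv] at h2
  have h01 : (0 : Fin p → ZMod 2) ∈ C1 := by
    have h2 : red (0 : Fin p → ℤ) ∈ C1 := (hLC1 _).mp (zero_mem L1)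
    have hz : red (0 : Fin p → ℤ) = 0 := by funext k; simp [red]
    rwa [hz] at h2
  rw [q_transfer L1 C1 hLC1] at hq1
  rw [r_transfer L1 C1 hLC1] at hr1
  obtain ⟨C2, hadd2, h02, hcard2, hr2, hw2⟩ :=
    iterate_step s z2 z3 h23 (z2 - z1) C1 hadd1 h01 hq1 (by omega)
  have hneg : ∀ a : ZMod 2, -a = a := by decide
  set L2 : AddSubgroup (Fin p → ℤ) :=
    { carrier := {x | red x ∈ C2}
      zero_mem' := by
        show red (0 : Fin p → ℤ) ∈ C2
        have hz : red (0 : Fin p → ℤ) = 0 := by funext k; simp [red]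
        rw [hz]; exact h02
      add_mem' := by
        intro a b ha hb
        show red (a + b) ∈ C2
        rw [red_add]
        exact hadd2 _ ha _ hb
      neg_mem' := by
        intro a ha
        show red (-a) ∈ C2
        have : red (-a) = red a := by
          funext k
          show ((-(a k) : ℤ) : ZMod 2) = ((a k : ℤ) : ZMod 2)
          push_cast
          exact hneg _
        rw [this]
        exact ha } with hL2
  have hLC2 : ∀ x : Fin p → ℤ, x ∈ L2 ↔ red x ∈ C2 := fun x => Iff.rfl
  refine ⟨L2, ?_, ?_, ?_, ?_⟩
  · intro x hx
    show red x ∈ C2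
    have hz : red x = 0 := by
      funext k
      exact (ZMod.intCast_zmod_eq_zero_iff_dvd _ 2).mpr (hx k)
    rw [hz]; exact h02
  · rw [q_transfer L2 C2 hLC2]; exact hcard2
  · rw [r_transfer L2 C2 hLC2]; omega
  · rw [latticeSize_eq_wsum s L1 C1 hLC1, latticeSize_eq_wsum s L2 C2 hLC2]
    exact hw2
end

section
/- Let w > 0, let s ≥ 4 be an even integer, and let γ ⊆ [0,w] be a finite set with exactly s elements. Then d*(γ) + (s/2 − 1)·d⁺(γ) ≤ w. In particular, d⁺(γ) ≤ 2w/(s−2), and if d*(γ) ≥ v₁ for some v₁ ≥ 0 then d⁺(γ) ≤ (2w − 2v₁)/(s−2). -/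
/-! Write `γ = {x₀ < ⋯ < x_{2m+1}}`, so `s = 2m + 2`. The first gap is at least `d*`, and the
remaining span `x_{2m+1} - x₁` splits into the `m` steps `x_{2j+3} - x_{2j+1}`, each at least `d⁺`.
Hence `d* + m d⁺ ≤ x_{2m+1} - x₀ ≤ w`; the two consequences follow since `d* ≥ 0`. -/

open scoped BigOperators Classical

section Levels

variable (γ : Finset ℝ)

lemma nthLevel_eq_getElem {i : ℕ} (hi : i < γ.card) :
    nthLevel γ i = (γ.sort (· ≤ ·))[i]'(by rwa [Finset.length_sort]) :=
  List.getD_eq_getElem _ _ _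

lemma nthLevel_mem {i : ℕ} (hi : i < γ.card) : nthLevel γ i ∈ γ := by
  rw [nthLevel_eq_getElem γ hi]
  exact (Finset.mem_sort _).mp (List.getElem_mem _)

lemma nthLevel_le_nthLevel {i j : ℕ} (hij : i ≤ j) (hj : j < γ.card) :
    nthLevel γ i ≤ nthLevel γ j := by
  rw [nthLevel_eq_getElem γ (hij.trans_lt hj), nthLevel_eq_getElem γ hj]
  exact (γ.pairwise_sort (· ≤ ·)).rel_get_of_le hij

lemma dstar_le {i : ℕ} (hi : i + 1 < γ.card) :
    dstar γ ≤ nthLevel γ (i + 1) - nthLevel γ i :=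
  ciInf_le (Set.finite_range _).bddBelow (⟨i, by omega⟩ : Fin (γ.card - 1))

lemma dplus_le {i : ℕ} (hi : i + 2 < γ.card) :
    dplus γ ≤ nthLevel γ (i + 2) - nthLevel γ i :=
  ciInf_le (Set.finite_range _).bddBelow (⟨i, by omega⟩ : Fin (γ.card - 2))

lemma dstar_nonneg : 0 ≤ dstar γ :=
  Real.iInf_nonneg fun i =>
    sub_nonneg.mpr (nthLevel_le_nthLevel γ (Nat.le_succ i.1) (by omega))

lemma mul_dplus_le (k : ℕ) {i : ℕ} (hk : i + 2 * k < γ.card) :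
    k * dplus γ ≤ nthLevel γ (i + 2 * k) - nthLevel γ i := by
  induction k with
  | zero => simp
  | succ k ih =>
    have hstep := dplus_le γ (i := i + 2 * k) (by omega)
    have hlast : i + 2 * k + 2 = i + 2 * (k + 1) := by ring
    rw [hlast] at hstep
    push_cast
    linarith [ih (by omega)]

theorem dstar_add_mul_dplus_le {a b : ℝ} (hγ : ↑γ ⊆ Set.Icc a b) {m : ℕ}
    (hcard : γ.card = 2 * m + 2) :
    dstar γ + m * dplus γ ≤ b - a := by
  have hfirst := dstar_le γ (i := 0) (by omega)
  have hrest := mul_dplus_le γ m (i := 1) (by omega)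
  have ha : a ≤ nthLevel γ 0 := (hγ (nthLevel_mem γ (by omega))).1
  have hb : nthLevel γ (1 + 2 * m) ≤ b := (hγ (nthLevel_mem γ (by omega))).2
  simp only [zero_add] at hfirst
  linarith

end Levels

theorem stmt_10_general (w : ℝ) (s : ℕ) (hs : 4 ≤ s) (heven : Even s)
    (γ : Finset ℝ) (hγ : ↑γ ⊆ Set.Icc (0 : ℝ) w) (hcard : γ.card = s) :
    dstar γ + ((s : ℝ) / 2 - 1) * dplus γ ≤ w ∧
    dplus γ ≤ 2 * w / ((s : ℝ) - 2) ∧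
    (∀ v1 : ℝ, 0 ≤ v1 → v1 ≤ dstar γ → dplus γ ≤ (2 * w - 2 * v1) / ((s : ℝ) - 2)) := by
  obtain ⟨m, hm⟩ : ∃ m : ℕ, s = 2 * m + 2 := ⟨s / 2 - 1, by rcases heven with ⟨t, ht⟩; omega⟩
  subst hm
  have hmain := dstar_add_mul_dplus_le γ hγ hcard
  have hm_pos : (0 : ℝ) < 2 * m := by
    have : 1 ≤ m := by omega
    positivity
  have hhalf : ((2 * m + 2 : ℕ) : ℝ) / 2 - 1 = m := by push_cast; ring
  have hsub : ((2 * m + 2 : ℕ) : ℝ) - 2 = 2 * m := by push_cast; ring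
  have hdstar := dstar_nonneg γ
  rw [hhalf, hsub, le_div_iff₀ hm_pos]
  refine ⟨by linarith, by linarith, fun v1 _ hv1 => ?_⟩
  rw [le_div_iff₀ hm_pos]
  linarith

/-- for even `s ≥ 4` and any size-`s` subset `γ` of `[0,w]`,
`d*(γ) + (s/2 − 1)·d⁺(γ) ≤ w`; in particular `d⁺(γ) ≤ 2w/(s−2)` and,
if `d*(γ) ≥ v₁ ≥ 0`, then `d⁺(γ) ≤ (2w − 2v₁)/(s−2)`. -/
theorem stmt_10 (w : ℝ) (hw : 0 < w) (s : ℕ) (hs : 4 ≤ s) (heven : Even s)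
    (γ : Finset ℝ) (hγ : ↑γ ⊆ Set.Icc (0 : ℝ) w) (hcard : γ.card = s) :
    dstar γ + ((s : ℝ) / 2 - 1) * dplus γ ≤ w ∧
    dplus γ ≤ 2 * w / ((s : ℝ) - 2) ∧
    (∀ v1 : ℝ, 0 ≤ v1 → v1 ≤ dstar γ → dplus γ ≤ (2 * w - 2 * v1) / ((s : ℝ) - 2)) :=
  stmt_10_general w s hs heven γ hγ hcard
end

section
/- Let p ≥ 1, let 𝓛 be a standard interleaved lattice in dimension p, let s = (s_1,…,s_p) with each s_k an integer ≥ 2, and for each k let 𝒴_k ⊂ ℝ be a finite set with exactly s_k elements. Then for every x ∈ (𝓛 ∩ {0,1}^p) with x ≠ 0, the separation distance satisfies ρ(D(𝓛,s,𝒴,0_p)) ≤ ( Σ_{k : x_k = 1} d*(𝒴_k)² )^{1/2}. -/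
open scoped BigOperators Classical

lemma nthLevel_lt_nthLevel (γ : Finset ℝ) {i j : ℕ} (hij : i < j) (hj : j < γ.card) :
    nthLevel γ i < nthLevel γ j := by
  have hlen : (γ.sort (· ≤ ·)).length = γ.card := Finset.length_sort _
  have hi' : i < (γ.sort (· ≤ ·)).length := by omega
  have hj' : j < (γ.sort (· ≤ ·)).length := by omega
  unfold nthLevel
  rw [List.getD_eq_getElem _ _ hi', List.getD_eq_getElem _ _ hj']
  exact (Finset.sortedLT_sort γ).getElem_lt_getElem_iff.mpr hij

lemma dstar_exists (γ : Finset ℝ) (h : 2 ≤ γ.card) :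
    ∃ i : Fin (γ.card - 1), dstar γ = nthLevel γ (i.1 + 1) - nthLevel γ i.1 := by
  have hne : Nonempty (Fin (γ.card - 1)) := ⟨⟨0, by omega⟩⟩
  obtain ⟨i, hi⟩ := Finite.exists_min
    (fun i : Fin (γ.card - 1) => nthLevel γ (i.1 + 1) - nthLevel γ i.1)
  exact ⟨i, le_antisymm (ciInf_le (Set.Finite.bddBelow (Set.finite_range _)) i) (le_ciInf hi)⟩

/-- for every nonzero `x ∈ 𝓛 ∩ {0,1}^p`,
`ρ(D(𝓛,s,𝒴,0)) ≤ (Σ_{k : x_k = 1} d*(𝒴_k)²)^{1/2}`. -/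
theorem stmt_14 (p : ℕ) (hp : 1 ≤ p) (L : AddSubgroup (Fin p → ℤ)) (hL : IsStdIL p L)
    (s : Fin p → ℕ) (hs : ∀ k, 2 ≤ s k)
    (Y : Fin p → Finset ℝ) (hY : ∀ k, (Y k).card = s k)
    (x : Fin p → ℤ) (hxL : x ∈ L) (hx01 : ∀ k, x k = 0 ∨ x k = 1) (hx0 : x ≠ 0) :
    (design p L s Y 0).einfsep ≤
      ENNReal.ofReal
        (Real.sqrt (∑ k ∈ Finset.univ.filter (fun k => x k = 1), dstar (Y k) ^ 2)) := by
  classical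
  have hcard : ∀ k, 2 ≤ (Y k).card := fun k => (hY k) ▸ hs k
  have hmin := fun k => dstar_exists (Y k) (hcard k)
  choose idx hidx using hmin
  have hidxlt : ∀ k, (idx k).1 + 1 < s k := fun k => by
    have h1 := (idx k).2; have h2 := hY k; have h3 := hs k; omega
  -- define the two nat index vectors
  set a : Fin p → ℕ := fun k =>
    if x k = 1 then (if Even (idx k).1 then (idx k).1 else (idx k).1 + 1) else 0 with ha
  set b : Fin p → ℕ := fun k =>
    if x k = 1 then (if Even (idx k).1 then (idx k).1 + 1 else (idx k).1) else 0 with hb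
  have haeven : ∀ k, Even (a k) := fun k => by
    simp only [ha]
    split_ifs with h1 h2
    · exact h2
    · exact Nat.even_add_one.mpr h2
    · exact Even.zero
  -- the integer vectors
  set ya : Fin p → ℤ := fun k => (a k : ℤ) with hya
  set yb : Fin p → ℤ := fun k => (b k : ℤ) with hyb
  have hyaL : ya ∈ L := hL.1 _ (fun k => by
    have : (2:ℕ) ∣ a k := (haeven k).two_dvd
    simp only [hya]
    exact_mod_cast Int.natCast_dvd_natCast.mpr this)
  have hybL : yb ∈ L := by
    have hdiff : (yb - ya - x) ∈ L := by
      apply hL.1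
      intro k
      simp only [Pi.sub_apply, hyb, hya, hb, ha]
      rcases hx01 k with h | h
      · have hne1 : x k ≠ 1 := by omega
        rw [if_neg hne1, if_neg hne1, h]
        push_cast
      · rw [if_pos h, if_pos h, h]
        split_ifs <;> push_cast <;> omega
    have : yb = ya + x + (yb - ya - x) := by ring
    rw [this]; exact L.add_mem (L.add_mem hyaL hxL) hdiff
  have habox : ya ∈ latticeBox p L s 0 := by
    refine ⟨by simpa using hyaL, fun k => ⟨by positivity, ?_⟩⟩
    have := hidxlt k
    simp only [hya, ha]
    split_ifs <;> push_cast <;> omega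
  have hbbox : yb ∈ latticeBox p L s 0 := by
    refine ⟨by simpa using hybL, fun k => ⟨by positivity, ?_⟩⟩
    have := hidxlt k
    simp only [hyb, hb]
    split_ifs <;> push_cast <;> omega
  -- the two design points
  set va : EuclideanSpace ℝ (Fin p) := WithLp.toLp 2 (fun k => nthLevel (Y k) (a k)) with hva
  set vb : EuclideanSpace ℝ (Fin p) := WithLp.toLp 2 (fun k => nthLevel (Y k) (b k)) with hvb
  have hvaD : va ∈ design p L s Y 0 :=
    ⟨ya, habox, fun k => by simp [hva, hya]⟩
  have hvbD : vb ∈ design p L s Y 0 :=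
    ⟨yb, hbbox, fun k => by simp [hvb, hyb]⟩
  -- coordinate facts
  have hgap : ∀ k, x k = 1 → (va k - vb k) ^ 2 = dstar (Y k) ^ 2 := by
    intro k hk
    simp only [hva, hvb, PiLp.toLp_apply, ha, hb, if_pos hk]
    rw [hidx k]
    split_ifs with h
    · ring
    · ring
  have heq0 : ∀ k, x k ≠ 1 → va k = vb k := by
    intro k hk
    simp [hva, hvb, ha, hb, if_neg hk]
  -- distinctness
  obtain ⟨k0, hk0⟩ : ∃ k, x k ≠ 0 := by
    by_contra h; push_neg at h; exact hx0 (funext h)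
  have hk1 : x k0 = 1 := (hx01 k0).resolve_left hk0
  have hne : va ≠ vb := by
    intro h
    have hcoord : va k0 = vb k0 := congrArg (· k0) h
    have hlt : (idx k0).1 + 1 < (Y k0).card := by
      have := hidxlt k0; have := hY k0; omega
    have := nthLevel_lt_nthLevel (Y k0) (Nat.lt_succ_self (idx k0).1) hlt
    simp only [hva, hvb, PiLp.toLp_apply, ha, hb, if_pos hk1] at hcoord
    split_ifs at hcoord <;> [exact absurd hcoord (ne_of_gt this).symm;
      exact absurd hcoord (ne_of_gt this)]
  calc (design p L s Y 0).einfsep ≤ edist va vb :=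
        Set.einfsep_le_edist_of_mem hvaD hvbD hne
    _ = ENNReal.ofReal (dist va vb) := edist_dist va vb
    _ ≤ _ := by
        apply ENNReal.ofReal_le_ofReal
        rw [EuclideanSpace.dist_eq]
        apply Real.sqrt_le_sqrt
        rw [← Finset.sum_filter_add_sum_filter_not Finset.univ (fun k => x k = 1)]
        have h2 : ∑ k ∈ Finset.univ.filter (fun k => ¬ x k = 1),
            dist (va k) (vb k) ^ 2 = 0 := by
          apply Finset.sum_eq_zero
          intro k hk
          simp only [Finset.mem_filter] at hk
          rw [heq0 k hk.2, dist_self]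
          ring
        rw [h2, add_zero]
        apply Finset.sum_le_sum
        intro k hk
        simp only [Finset.mem_filter] at hk
        rw [Real.dist_eq, sq_abs]
        exact (hgap k hk.2).le
end
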